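/- arXiv:1508.04675 — 4 statements merged into one kernel-verified Lean document; each statement's English description precedes it below -/
import Mathlib

section
/- Every d-regular graph G on n vertices has at most (2^{d+1} − 1)^{n/(2d)} independent sets; that is, the number of independent sets of G is at most that of a disjoint union of n/(2d) copies of K_{d,d}. -/
open Finset
open scoped Classical
open scoped NNReal

/-- The finset of independent sets of a graph (including the empty set). -/
noncomputable def indepFinset {V : Type*} [Fintype V] (G : SimpleGraph V) :
    Finset (Finset V) :=
  Finset.univ.powerset.filter (fun s : Finset V => ∀ u ∈ s, ∀ v ∈ s, ¬ G.Adj u v)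

/-- root-power cancellation in ℝ≥0 -/
lemma my_rpow_inv_pow (d : ℕ) (hd : d ≠ 0) (x : ℝ≥0) : (x ^ ((d:ℝ)⁻¹)) ^ d = x := by
  rw [← NNReal.rpow_natCast (x ^ ((d:ℝ)⁻¹)) d, ← NNReal.rpow_mul,
    inv_mul_cancel₀ (by exact_mod_cast hd), NNReal.rpow_one]

lemma my_pow_rpow_inv (d : ℕ) (hd : d ≠ 0) (x : ℝ≥0) : (x ^ d) ^ ((d:ℝ)⁻¹) = x := by
  rw [← NNReal.rpow_natCast x d, ← NNReal.rpow_mul,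
    mul_inv_cancel₀ (by exact_mod_cast hd), NNReal.rpow_one]

/-- Two-point Hölder: if `|s| = d` then `∏ x + ∏ y ≤ ∏ (xᵢ^d + yᵢ^d)^(1/d)`. -/
lemma holder_two_point {β : Type*} (d : ℕ) (hd : d ≠ 0) (s : Finset β) (hs : s.card = d)
    (x y : β → ℝ≥0) :
    (∏ i ∈ s, x i) + ∏ i ∈ s, y i ≤ ∏ i ∈ s, ((x i ^ d + y i ^ d) ^ ((d:ℝ)⁻¹)) := by
  by_cases hzero : ∃ i ∈ s, x i ^ d + y i ^ d = 0
  · obtain ⟨i, hi, h0⟩ := hzero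
    have hx : x i = 0 := by
      have := add_eq_zero.mp h0
      simpa [pow_eq_zero_iff hd] using this.1
    have hy : y i = 0 := by
      have := add_eq_zero.mp h0
      simpa [pow_eq_zero_iff hd] using this.2
    rw [Finset.prod_eq_zero hi hx, Finset.prod_eq_zero hi hy]
    simp
  · push_neg at hzero
    set c : β → ℝ≥0 := fun i => (x i ^ d + y i ^ d) ^ ((d:ℝ)⁻¹) with hc
    have hcpow : ∀ i ∈ s, c i ^ d = x i ^ d + y i ^ d := fun i _ =>
      my_rpow_inv_pow d hd _
    have hcne : ∀ i ∈ s, c i ≠ 0 := by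
      intro i hi h0
      apply hzero i hi
      rw [← hcpow i hi, h0, zero_pow hd]
    -- AM-GM for the normalized values
    have amgm : ∀ z : β → ℝ≥0, (∏ i ∈ s, (z i / c i)) ≤
        ∑ i ∈ s, ((d:ℝ≥0))⁻¹ * (z i / c i) ^ d := by
      intro z
      have := NNReal.geom_mean_le_arith_mean_weighted s (fun _ => ((d:ℝ≥0))⁻¹)
        (fun i => (z i / c i) ^ d) (by
          simp [hs]
          rw [mul_inv_cancel₀]
          exact_mod_cast hd)
      calc (∏ i ∈ s, (z i / c i))
          = ∏ i ∈ s, ((z i / c i) ^ d) ^ ((((d:ℝ≥0)):ℝ)⁻¹) := by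
            apply Finset.prod_congr rfl
            intro i _
            rw [show ((((d:ℝ≥0)):ℝ))⁻¹ = ((d:ℝ))⁻¹ by norm_cast,
              my_pow_rpow_inv d hd]
        _ ≤ _ := this
    have key : (∏ i ∈ s, (x i / c i)) + (∏ i ∈ s, (y i / c i)) ≤ 1 := by
      calc (∏ i ∈ s, (x i / c i)) + (∏ i ∈ s, (y i / c i))
          ≤ (∑ i ∈ s, ((d:ℝ≥0))⁻¹ * (x i / c i) ^ d) +
            (∑ i ∈ s, ((d:ℝ≥0))⁻¹ * (y i / c i) ^ d) := add_le_add (amgm x) (amgm y)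
        _ = ∑ i ∈ s, ((d:ℝ≥0))⁻¹ * ((x i / c i) ^ d + (y i / c i) ^ d) := by
            rw [← Finset.sum_add_distrib]; apply Finset.sum_congr rfl; intro i _; ring
        _ = ∑ i ∈ s, ((d:ℝ≥0))⁻¹ := by
            apply Finset.sum_congr rfl
            intro i hi
            have : (x i / c i) ^ d + (y i / c i) ^ d = 1 := by
              rw [div_pow, div_pow, ← add_div, ← hcpow i hi, div_self]
              exact pow_ne_zero d (hcne i hi)
            rw [this, mul_one]
        _ = 1 := by
            rw [Finset.sum_const, hs, nsmul_eq_mul, mul_inv_cancel₀]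
            exact_mod_cast hd
    have hprodc : ∀ z : β → ℝ≥0, (∏ i ∈ s, (z i / c i)) * ∏ i ∈ s, c i = ∏ i ∈ s, z i := by
      intro z
      rw [← Finset.prod_mul_distrib]
      apply Finset.prod_congr rfl
      intro i hi
      rw [div_mul_cancel₀]
      exact hcne i hi
    calc (∏ i ∈ s, x i) + ∏ i ∈ s, y i
        = ((∏ i ∈ s, (x i / c i)) + (∏ i ∈ s, (y i / c i))) * ∏ i ∈ s, c i := by
          rw [add_mul, hprodc, hprodc]
      _ ≤ 1 * ∏ i ∈ s, c i := by
          exact mul_le_mul_of_nonneg_right key zero_le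
      _ = _ := one_mul _

/-- Discrete Finner inequality for a uniform `d`-cover. -/
lemma finner {α β : Type*} [DecidableEq α] (d : ℕ) (hd : d ≠ 0) (B : Finset β)
    (A : Finset α) :
    ∀ (N : β → Finset α) (h : β → Finset α → ℝ≥0),
      (∀ v ∈ B, N v ⊆ A) → (∀ a ∈ A, (B.filter (fun v => a ∈ N v)).card = d) →
      (∑ S ∈ A.powerset, ∏ v ∈ B, h v (S ∩ N v)) ^ d ≤
        ∏ v ∈ B, ∑ T ∈ (N v).powerset, (h v T) ^ d := by
  induction A using Finset.induction_on with
  | empty =>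
      intro N h hN hcov
      simp only [Finset.powerset_empty, Finset.sum_singleton, Finset.empty_inter]
      rw [← Finset.prod_pow]
      apply Finset.prod_le_prod (fun _ _ => zero_le)
      intro v hv
      have : N v = ∅ := Finset.subset_empty.mp (hN v hv)
      simp [this]
  | @insert a A' ha IH =>
      intro N h hN hcov
      have hBa : (B.filter (fun v => a ∈ N v)).card = d := hcov a (Finset.mem_insert_self a A')
      set N' : β → Finset α := fun v => (N v).erase a with hN'def
      set h' : β → Finset α → ℝ≥0 := fun v T =>
        if a ∈ N v then ((h v T ^ d + h v (insert a T) ^ d) ^ ((d:ℝ)⁻¹)) else h v T with hh'def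
      -- injectivity of insert a on subsets avoiding a
      have hinj : ∀ {s : Finset α}, a ∉ s → ∀ S₁ ∈ s.powerset, ∀ S₂ ∈ s.powerset,
          insert a S₁ = insert a S₂ → S₁ = S₂ := by
        intro s hs S₁ h1 S₂ h2 heq
        have ha1 : a ∉ S₁ := fun h => hs (Finset.mem_powerset.mp h1 h)
        have ha2 : a ∉ S₂ := fun h => hs (Finset.mem_powerset.mp h2 h)
        rw [← Finset.erase_insert ha1, ← Finset.erase_insert ha2, heq]
      -- step 1: split the sum over the powerset of `insert a A'`
      have hsplit : (∑ S ∈ (insert a A').powerset, ∏ v ∈ B, h v (S ∩ N v)) =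
          ∑ S ∈ A'.powerset, ((∏ v ∈ B, h v (S ∩ N v)) +
            ∏ v ∈ B, h v ((insert a S) ∩ N v)) := by
        rw [Finset.powerset_insert, Finset.sum_union, Finset.sum_image]
        · rw [Finset.sum_add_distrib]
        · intro S₁ h1 S₂ h2 heq; exact hinj ha S₁ h1 S₂ h2 heq
        · rw [Finset.disjoint_right]
          intro S hSimg hSpow
          obtain ⟨S', -, rfl⟩ := Finset.mem_image.mp hSimg
          exact ha (Finset.mem_powerset.mp hSpow (Finset.mem_insert_self a S'))
      -- step 2: pointwise Hölder bound
      have hpt : ∀ S ∈ A'.powerset, (∏ v ∈ B, h v (S ∩ N v)) +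
          (∏ v ∈ B, h v ((insert a S) ∩ N v)) ≤ ∏ v ∈ B, h' v (S ∩ N' v) := by
        intro S hS
        have haS : a ∉ S := fun h => ha (Finset.mem_powerset.mp hS h)
        have e1 : ∀ v, a ∉ N v → S ∩ N v = S ∩ N' v := by
          intro v hv
          simp only [hN'def, Finset.erase_eq_of_notMem hv]
        have e2 : ∀ v, S ∩ N v = S ∩ N' v := by
          intro v
          ext x
          simp only [Finset.mem_inter, hN'def, Finset.mem_erase]
          constructor
          · rintro ⟨hx1, hx2⟩
            exact ⟨hx1, fun hxa => haS (hxa ▸ hx1), hx2⟩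
          · rintro ⟨hx1, _, hx2⟩; exact ⟨hx1, hx2⟩
        have e3 : ∀ v, a ∈ N v → (insert a S) ∩ N v = insert a (S ∩ N' v) := by
          intro v hv
          ext x
          simp only [Finset.mem_inter, Finset.mem_insert, hN'def, Finset.mem_erase]
          constructor
          · rintro ⟨hx1 | hx1, hx2⟩
            · exact Or.inl hx1
            · rcases eq_or_ne x a with rfl | hxa
              · exact Or.inl rfl
              · exact Or.inr ⟨hx1, hxa, hx2⟩
          · rintro (rfl | ⟨hx1, _, hx2⟩)
            · exact ⟨Or.inl rfl, hv⟩
            · exact ⟨Or.inr hx1, hx2⟩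
        have e4 : ∀ v, a ∉ N v → (insert a S) ∩ N v = S ∩ N' v := by
          intro v hv
          rw [← e2 v]
          ext x
          simp only [Finset.mem_inter, Finset.mem_insert]
          constructor
          · rintro ⟨rfl | hx1, hx2⟩
            · exact absurd hx2 hv
            · exact ⟨hx1, hx2⟩
          · rintro ⟨hx1, hx2⟩; exact ⟨Or.inr hx1, hx2⟩
        rw [← Finset.prod_filter_mul_prod_filter_not B (fun v => a ∈ N v)
            (fun v => h v (S ∩ N v)),
          ← Finset.prod_filter_mul_prod_filter_not B (fun v => a ∈ N v)
            (fun v => h v ((insert a S) ∩ N v)),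
          ← Finset.prod_filter_mul_prod_filter_not B (fun v => a ∈ N v)
            (fun v => h' v (S ∩ N' v))]
        have eout : ∀ v ∈ B.filter (fun v => ¬ a ∈ N v),
            h v (S ∩ N v) = h' v (S ∩ N' v) ∧ h v ((insert a S) ∩ N v) = h' v (S ∩ N' v) := by
          intro v hv
          have hav : a ∉ N v := (Finset.mem_filter.mp hv).2
          constructor
          · rw [e2 v]; simp only [hh'def, if_neg hav]
          · rw [e4 v hav]; simp only [hh'def, if_neg hav]
        rw [Finset.prod_congr rfl (fun v hv => (eout v hv).1),
          Finset.prod_congr rfl (fun v hv => (eout v hv).2)]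
        rw [mul_comm (∏ v ∈ B.filter (fun v => a ∈ N v), h' v (S ∩ N' v)) _]
        rw [mul_comm (∏ v ∈ B.filter (fun v => a ∈ N v), h v (S ∩ N v)) _,
          mul_comm (∏ v ∈ B.filter (fun v => a ∈ N v), h v ((insert a S) ∩ N v)) _,
          ← mul_add]
        apply mul_le_mul_of_nonneg_left _ zero_le
        calc (∏ v ∈ B.filter (fun v => a ∈ N v), h v (S ∩ N v)) +
              ∏ v ∈ B.filter (fun v => a ∈ N v), h v ((insert a S) ∩ N v)
            = (∏ v ∈ B.filter (fun v => a ∈ N v), h v (S ∩ N' v)) +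
              ∏ v ∈ B.filter (fun v => a ∈ N v), h v (insert a (S ∩ N' v)) := by
              exact congrArg₂ (· + ·)
                (Finset.prod_congr rfl (fun v _ => congrArg (h v) (e2 v)))
                (Finset.prod_congr rfl
                  (fun v hv => congrArg (h v) (e3 v (Finset.mem_filter.mp hv).2)))
          _ ≤ ∏ v ∈ B.filter (fun v => a ∈ N v),
                ((h v (S ∩ N' v) ^ d + h v (insert a (S ∩ N' v)) ^ d) ^ ((d:ℝ)⁻¹)) :=
              holder_two_point d hd _ hBa _ _
          _ = ∏ v ∈ B.filter (fun v => a ∈ N v), h' v (S ∩ N' v) := by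
              apply Finset.prod_congr rfl
              intro v hv
              simp only [hh'def, if_pos (Finset.mem_filter.mp hv).2]
      -- step 3: apply the induction hypothesis
      have hIH := IH N' h'
        (by
          intro v hv
          intro x hx
          have hx' := Finset.mem_erase.mp hx
          have := hN v hv hx'.2
          rcases Finset.mem_insert.mp this with rfl | h
          · exact absurd rfl hx'.1
          · exact h)
        (by
          intro b hb
          have hba : b ≠ a := fun h => ha (h ▸ hb)
          have : (B.filter (fun v => b ∈ N' v)) = (B.filter (fun v => b ∈ N v)) := by
            apply Finset.filter_congr
            intro v _
            simp [hN'def, Finset.mem_erase, hba]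
          rw [this]
          exact hcov b (Finset.mem_insert_of_mem hb))
      -- step 4: rewrite RHS of IH
      have hRHS : (∏ v ∈ B, ∑ T ∈ (N' v).powerset, (h' v T) ^ d) =
          ∏ v ∈ B, ∑ T ∈ (N v).powerset, (h v T) ^ d := by
        apply Finset.prod_congr rfl
        intro v _
        by_cases hav : a ∈ N v
        · have hNv : N v = insert a ((N v).erase a) := (Finset.insert_erase hav).symm
          have haN' : a ∉ (N v).erase a := Finset.notMem_erase a (N v)
          have hdisj : Disjoint ((N v).erase a).powerset
              (((N v).erase a).powerset.image (insert a)) := by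
            rw [Finset.disjoint_right]
            intro T hTimg hTpow
            obtain ⟨T', -, rfl⟩ := Finset.mem_image.mp hTimg
            exact haN' (Finset.mem_powerset.mp hTpow (Finset.mem_insert_self a T'))
          calc (∑ T ∈ (N' v).powerset, (h' v T) ^ d)
              = ∑ T ∈ ((N v).erase a).powerset,
                  ((h v T)^d + (h v (insert a T))^d) := by
                simp only [hN'def]
                refine Finset.sum_congr rfl (fun T _ => ?_)
                simp only [hh'def, if_pos hav]
                exact my_rpow_inv_pow d hd _
            _ = (∑ T ∈ ((N v).erase a).powerset, (h v T)^d)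
                + ∑ T ∈ ((N v).erase a).powerset, (h v (insert a T))^d :=
                Finset.sum_add_distrib
            _ = (∑ T ∈ ((N v).erase a).powerset, (h v T)^d)
                + ∑ T ∈ ((N v).erase a).powerset.image (insert a), (h v T)^d := by
                congr 1
                rw [Finset.sum_image (fun T₁ h1 T₂ h2 => hinj haN' T₁ h1 T₂ h2)]
            _ = ∑ T ∈ (N v).powerset, (h v T)^d := by
                rw [← Finset.sum_union hdisj, ← Finset.powerset_insert, ← hNv]
        · simp only [hh'def, if_neg hav, hN'def, Finset.erase_eq_of_notMem hav]
      -- combine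
      calc (∑ S ∈ (insert a A').powerset, ∏ v ∈ B, h v (S ∩ N v)) ^ d
          ≤ (∑ S ∈ A'.powerset, ∏ v ∈ B, h' v (S ∩ N' v)) ^ d := by
            apply pow_le_pow_left₀ zero_le
            rw [hsplit]
            exact Finset.sum_le_sum hpt
        _ ≤ ∏ v ∈ B, ∑ T ∈ (N' v).powerset, (h' v T) ^ d := hIH
        _ = _ := hRHS

section zhao

variable {V : Type*} [Fintype V] (G : SimpleGraph V)

/-- connectivity within `D` -/
def zr (D : Finset V) : V → V → Prop :=
  Relation.ReflTransGen (fun x y => G.Adj x y ∧ x ∈ D ∧ y ∈ D)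

lemma zr_symm (D : Finset V) {u v : V} (h : zr G D u v) : zr G D v u :=
  (@Relation.ReflTransGen.symmetric _ (fun x y => G.Adj x y ∧ x ∈ D ∧ y ∈ D)
    ⟨fun x y hxy => ⟨hxy.1.symm, hxy.2.2, hxy.2.1⟩⟩).symm _ _ h

/-- the component of `u` inside `D` -/
noncomputable def zcomp (D : Finset V) (u : V) : Finset V :=
  D.filter (zr G D u)

/-- canonical representative of the component of `u` -/
noncomputable def zm (D : Finset V) (u : V) : V :=
  if h : (zcomp G D u).Nonempty then h.choose else u

lemma zm_mem (D : Finset V) {u : V} (hu : u ∈ D) :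
    zm G D u ∈ D ∧ zr G D u (zm G D u) := by
  have hne : (zcomp G D u).Nonempty :=
    ⟨u, Finset.mem_filter.mpr ⟨hu, Relation.ReflTransGen.refl⟩⟩
  have hmem := hne.choose_spec
  simp only [zcomp, Finset.mem_filter] at hmem
  rw [zm, dif_pos hne]
  exact hmem

lemma zm_eq_of_zr (D : Finset V) {u v : V} (h : zr G D u v) :
    zm G D u = zm G D v := by
  have hcomp : zcomp G D u = zcomp G D v := by
    unfold zcomp
    apply Finset.filter_congr
    intro w _
    constructor
    · intro hw; exact Relation.ReflTransGen.trans (zr_symm G D h) hw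
    · intro hw; exact Relation.ReflTransGen.trans h hw
  rcases (Relation.ReflTransGen.cases_head h) with rfl | ⟨c, hc, -⟩
  · rfl
  · have hu : u ∈ D := hc.2.1
    have hne : (zcomp G D u).Nonempty :=
      ⟨u, Finset.mem_filter.mpr ⟨hu, Relation.ReflTransGen.refl⟩⟩
    have hne' : (zcomp G D v).Nonempty := hcomp ▸ hne
    simp only [zm, hcomp, dif_pos hne']

/-- Zhao's swap map. -/
noncomputable def zmap (I J : Finset V) : Finset V × Finset V :=
  ((I ∩ J) ∪ ((I ∪ J) \ (I ∩ J)).filter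
      (fun u => zm G ((I ∪ J) \ (I ∩ J)) u ∈ I),
   (I ∩ J) ∪ ((I ∪ J) \ (I ∩ J)).filter
      (fun u => zm G ((I ∪ J) \ (I ∩ J)) u ∉ I))

lemma zmap_mem {I J : Finset V} (hI : I ∈ indepFinset G) (hJ : J ∈ indepFinset G) :
    ∀ u ∈ (zmap G I J).1, ∀ v ∈ (zmap G I J).2, ¬ G.Adj u v := by
  simp only [indepFinset, Finset.mem_filter] at hI hJ
  have hIind : ∀ u ∈ I, ∀ v ∈ I, ¬ G.Adj u v := hI.2
  have hJind : ∀ u ∈ J, ∀ v ∈ J, ¬ G.Adj u v := hJ.2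
  intro u hu v hv hadj
  simp only [zmap] at hu hv
  set D := (I ∪ J) \ (I ∩ J) with hD
  -- a vertex of I∩J has no neighbours in I∪J
  have hiso : ∀ x ∈ I ∩ J, ∀ y ∈ I ∪ J, ¬ G.Adj x y := by
    intro x hx y hy hxy
    rcases Finset.mem_union.mp hy with h | h
    · exact hIind x (Finset.mem_inter.mp hx).1 y h hxy
    · exact hJind x (Finset.mem_inter.mp hx).2 y h hxy
  have hDsub : D ⊆ I ∪ J := Finset.sdiff_subset
  rcases Finset.mem_union.mp hu with hu' | hu' <;>
    rcases Finset.mem_union.mp hv with hv' | hv'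
  · exact hiso u hu' v (Finset.mem_union_left _ (Finset.mem_inter.mp hv').1) hadj
  · exact hiso u hu' v (hDsub (Finset.mem_filter.mp hv').1) hadj
  · exact hiso v hv' u (hDsub (Finset.mem_filter.mp hu').1) hadj.symm
  · -- both in D, distinct sides: contradiction via equality of representatives
    have hu2 := Finset.mem_filter.mp hu'
    have hv2 := Finset.mem_filter.mp hv'
    have hzr : zr G D u v := Relation.ReflTransGen.single ⟨hadj, hu2.1, hv2.1⟩
    have := zm_eq_of_zr G D hzr
    rw [this] at hu2
    exact hv2.2 hu2.2

lemma zmap_inj {I₁ J₁ I₂ J₂ : Finset V}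
    (h1I : I₁ ∈ indepFinset G) (h1J : J₁ ∈ indepFinset G)
    (h2I : I₂ ∈ indepFinset G) (h2J : J₂ ∈ indepFinset G)
    (heq : zmap G I₁ J₁ = zmap G I₂ J₂) : (I₁, J₁) = (I₂, J₂) := by
  simp only [indepFinset, Finset.mem_filter] at h1I h1J h2I h2J
  have hI1ind := h1I.2
  have hJ1ind := h1J.2
  have hI2ind := h2I.2
  have hJ2ind := h2J.2
  -- structural identities of the map
  have hST : ∀ I J : Finset V, (zmap G I J).1 ∩ (zmap G I J).2 = I ∩ J := by
    intro I J
    ext x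
    simp only [zmap, Finset.mem_inter, Finset.mem_union, Finset.mem_filter,
      Finset.mem_sdiff]
    tauto
  have hSTu : ∀ I J : Finset V, (zmap G I J).1 ∪ (zmap G I J).2 = I ∪ J := by
    intro I J
    ext x
    simp only [zmap, Finset.mem_inter, Finset.mem_union, Finset.mem_filter,
      Finset.mem_sdiff]
    by_cases h : zm G ((I ∪ J) \ (I ∩ J)) x ∈ I <;> tauto
  have hF : ∀ I J : Finset V, (zmap G I J).1 \ (I ∩ J) =
      ((I ∪ J) \ (I ∩ J)).filter (fun u => zm G ((I ∪ J) \ (I ∩ J)) u ∈ I) := by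
    intro I J
    ext x
    simp only [zmap, Finset.mem_inter, Finset.mem_union, Finset.mem_filter,
      Finset.mem_sdiff]
    tauto
  have hS : (zmap G I₁ J₁).1 = (zmap G I₂ J₂).1 := by rw [heq]
  have hK : I₁ ∩ J₁ = I₂ ∩ J₂ := by rw [← hST I₁ J₁, ← hST I₂ J₂, heq]
  have hU : I₁ ∪ J₁ = I₂ ∪ J₂ := by rw [← hSTu I₁ J₁, ← hSTu I₂ J₂, heq]
  set D := (I₁ ∪ J₁) \ (I₁ ∩ J₁) with hDdef
  have hD2 : D = (I₂ ∪ J₂) \ (I₂ ∩ J₂) := by rw [hDdef, hK, hU]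
  -- equality of the two filters
  have hFF : ∀ u ∈ D, (zm G D u ∈ I₁ ↔ zm G D u ∈ I₂) := by
    have h2 : D.filter (fun u => zm G D u ∈ I₁) = D.filter (fun u => zm G D u ∈ I₂) := by
      have e1 := hF I₁ J₁
      have e2 := hF I₂ J₂
      rw [← hDdef] at e1
      rw [← hD2] at e2
      rw [← e1, ← e2, hS, hK]
    intro u hu
    have := Finset.ext_iff.mp h2 u
    simp only [Finset.mem_filter] at this
    tauto
  -- membership flips along edges of D
  have flip : ∀ (I J : Finset V), (∀ u ∈ I, ∀ v ∈ I, ¬G.Adj u v) →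
      (∀ u ∈ J, ∀ v ∈ J, ¬G.Adj u v) →
      ∀ y z, y ∈ (I ∪ J) \ (I ∩ J) → z ∈ (I ∪ J) \ (I ∩ J) → G.Adj y z →
        (z ∈ I ↔ y ∉ I) := by
    intro I J hI hJ y z hy hz hadj
    rw [Finset.mem_sdiff, Finset.mem_union, Finset.mem_inter] at hy hz
    constructor
    · intro hzI hyI; exact hI y hyI z hzI hadj
    · intro hyI
      have hyJ : y ∈ J := by tauto
      by_contra hzI
      have hzJ : z ∈ J := by tauto
      exact hJ y hyJ z hzJ hadj
  -- propagation of agreement along components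
  have prop : ∀ x y : V, zr G D x y → (x ∈ I₁ ↔ x ∈ I₂) → (y ∈ I₁ ↔ y ∈ I₂) := by
    intro x y hxy hx
    simp only [zr] at hxy
    induction hxy with
    | refl => exact hx
    | tail hab hbc IH =>
        have e1 := flip I₁ J₁ hI1ind hJ1ind _ _ hbc.2.1 hbc.2.2 hbc.1
        have e2 := flip I₂ J₂ hI2ind hJ2ind _ _ (hD2 ▸ hbc.2.1) (hD2 ▸ hbc.2.2) hbc.1
        rw [e1, e2]
        exact not_congr IH
  have hmem : ∀ u ∈ D, (u ∈ I₁ ↔ u ∈ I₂) := by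
    intro u hu
    have h := zm_mem G D hu
    exact prop (zm G D u) u (zr_symm G D h.2) (hFF u hu)
  have hI12 : I₁ = I₂ := by
    ext x
    constructor
    · intro hx
      by_cases hxJ : x ∈ J₁
      · have : x ∈ I₂ ∩ J₂ := hK ▸ (Finset.mem_inter.mpr ⟨hx, hxJ⟩)
        exact (Finset.mem_inter.mp this).1
      · have hxD : x ∈ D := Finset.mem_sdiff.mpr
          ⟨Finset.mem_union_left _ hx, fun h => hxJ (Finset.mem_inter.mp h).2⟩
        exact (hmem x hxD).mp hx
    · intro hx
      by_cases hxJ : x ∈ J₂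
      · have : x ∈ I₁ ∩ J₁ := hK.symm ▸ (Finset.mem_inter.mpr ⟨hx, hxJ⟩)
        exact (Finset.mem_inter.mp this).1
      · have hxD : x ∈ D := by
          rw [hD2]
          exact Finset.mem_sdiff.mpr
            ⟨Finset.mem_union_left _ hx, fun h => hxJ (Finset.mem_inter.mp h).2⟩
        exact (hmem x hxD).mpr hx
  have hJ12 : J₁ = J₂ := by
    ext x
    constructor
    · intro hx
      have hxU : x ∈ I₂ ∪ J₂ := hU ▸ Finset.mem_union_right _ hx
      rcases Finset.mem_union.mp hxU with h | h
      · have : x ∈ I₁ ∩ J₁ := Finset.mem_inter.mpr ⟨hI12 ▸ h, hx⟩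
        exact (Finset.mem_inter.mp (hK ▸ this)).2
      · exact h
    · intro hx
      have hxU : x ∈ I₁ ∪ J₁ := hU.symm ▸ Finset.mem_union_right _ hx
      rcases Finset.mem_union.mp hxU with h | h
      · have : x ∈ I₂ ∩ J₂ := Finset.mem_inter.mpr ⟨hI12.symm ▸ h, hx⟩
        exact (Finset.mem_inter.mp (hK.symm ▸ this)).2
      · exact h
  rw [hI12, hJ12]

end zhao

set_option maxHeartbeats 1000000 in
/-- squared count of independent sets vs. compatible pairs -/
lemma sq_card_indep_le {V : Type*} [Fintype V] (G : SimpleGraph V) :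
    (indepFinset G).card ^ 2 ≤
      ((Finset.univ.powerset ×ˢ Finset.univ.powerset).filter
        (fun p : Finset V × Finset V => ∀ u ∈ p.1, ∀ v ∈ p.2, ¬ G.Adj u v)).card := by
  have : (indepFinset G).card ^ 2 = ((indepFinset G) ×ˢ (indepFinset G)).card := by
    rw [Finset.card_product, sq]
  rw [this]
  apply Finset.card_le_card_of_injOn (fun p => zmap G p.1 p.2)
  · intro p hp
    rw [Finset.mem_coe, Finset.mem_product] at hp
    rw [Finset.mem_coe, Finset.mem_filter, Finset.mem_product]
    exact ⟨⟨Finset.mem_powerset.mpr (Finset.subset_univ _),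
      Finset.mem_powerset.mpr (Finset.subset_univ _)⟩, zmap_mem G hp.1 hp.2⟩
  · intro p hp q hq hpq
    simp only [Finset.coe_product, Set.mem_prod, Finset.mem_coe] at hp hq
    have := zmap_inj G hp.1 hp.2 hq.1 hq.2 hpq
    rwa [Prod.mk.eta, Prod.mk.eta] at this

/-- counting compatible pairs by their first component -/
lemma card_pairs {V : Type*} [Fintype V] (G : SimpleGraph V) :
    ((Finset.univ.powerset ×ˢ Finset.univ.powerset).filter
        (fun p : Finset V × Finset V => ∀ u ∈ p.1, ∀ v ∈ p.2, ¬ G.Adj u v)).card =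
      ∑ S ∈ (Finset.univ : Finset V).powerset,
        2 ^ ((Finset.univ.filter (fun v => ∀ u ∈ S, ¬ G.Adj u v)).card) := by
  have hbi : ((Finset.univ.powerset ×ˢ Finset.univ.powerset).filter
      (fun p : Finset V × Finset V => ∀ u ∈ p.1, ∀ v ∈ p.2, ¬ G.Adj u v)) =
      (Finset.univ : Finset V).powerset.biUnion (fun S =>
        {S} ×ˢ (Finset.univ.filter (fun v => ∀ u ∈ S, ¬ G.Adj u v)).powerset) := by
    ext p
    simp only [Finset.mem_filter, Finset.mem_product, Finset.mem_biUnion,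
      Finset.mem_powerset, Finset.mem_singleton]
    constructor
    · rintro ⟨⟨-, -⟩, hcond⟩
      refine ⟨p.1, Finset.subset_univ _, rfl, ?_⟩
      intro v hv
      rw [Finset.mem_filter]
      exact ⟨Finset.mem_univ v, fun u hu => hcond u hu v hv⟩
    · rintro ⟨S, -, h1, h2⟩
      refine ⟨⟨Finset.subset_univ _, Finset.subset_univ _⟩, ?_⟩
      intro u hu v hv
      have := h2 hv
      rw [Finset.mem_filter] at this
      exact this.2 u (h1 ▸ hu)
  rw [hbi, Finset.card_biUnion]
  · apply Finset.sum_congr rfl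
    intro S _
    rw [Finset.card_product, Finset.card_singleton, one_mul, Finset.card_powerset]
  · intro S _ S' _ hne
    rw [Function.onFun, Finset.disjoint_left]
    intro p hp hp'
    rw [Finset.mem_product, Finset.mem_singleton] at hp hp'
    exact hne (hp.1 ▸ hp'.1)

set_option maxHeartbeats 1000000 in
/-- Every $d$-regular graph on $n$ vertices (with $2d \mid n$) has at most
$(2^{d+1}-1)^{n/(2d)}$ independent sets, the count for a disjoint union of
$n/(2d)$ copies of $K_{d,d}$. -/
theorem card_indepFinset_le {V : Type*} [Fintype V] (G : SimpleGraph V) (d : ℕ)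
    (hd : 1 ≤ d) (hreg : G.IsRegularOfDegree d) (hdvd : 2 * d ∣ Fintype.card V) :
    (indepFinset G).card ≤ (2 ^ (d + 1) - 1) ^ (Fintype.card V / (2 * d)) := by
  have hd0 : d ≠ 0 := by omega
  set n := Fintype.card V with hn
  set h : V → Finset V → ℝ≥0 := fun _ T => if T = ∅ then 2 else 1 with hh
  set N : V → Finset V := fun v => Finset.univ.filter (fun u => G.Adj v u) with hNdef
  have hNmem : ∀ v u : V, u ∈ N v ↔ G.Adj v u := by
    intro v u
    simp [hNdef]
  have hNcard : ∀ v : V, (N v).card = d := by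
    intro v
    have heq : N v = G.neighborFinset v := by
      ext u
      rw [hNmem, SimpleGraph.mem_neighborFinset]
    rw [heq]
    exact hreg v
  -- cover condition
  have hcov : ∀ a ∈ (Finset.univ : Finset V),
      (Finset.univ.filter (fun v => a ∈ N v)).card = d := by
    intro a _
    have : Finset.univ.filter (fun v => a ∈ N v) = N a := by
      ext v
      rw [Finset.mem_filter, hNmem, hNmem, G.adj_comm]
      simp
    rw [this]
    exact hNcard a
  -- per-vertex sum
  have hnat : (2:ℕ)^d + ((2:ℕ)^d - 1) = 2^(d+1) - 1 := by
    have h1 : 1 ≤ (2:ℕ)^d := Nat.one_le_two_pow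
    have h2 : (2:ℕ)^(d+1) = 2^d + 2^d := by rw [pow_succ]; ring
    omega
  have hsum : ∀ v : V, (∑ T ∈ (N v).powerset, (h v T) ^ d) =
      (((2:ℕ) ^ (d+1) - 1 : ℕ) : ℝ≥0) := by
    intro v
    have hem : (N v).powerset.filter (fun T => T = ∅) = {∅} := by
      ext T
      simp only [Finset.mem_filter, Finset.mem_powerset, Finset.mem_singleton]
      constructor
      · rintro ⟨-, rfl⟩; rfl
      · rintro rfl; exact ⟨Finset.empty_subset _, rfl⟩
    have hcards : ((N v).powerset.filter (fun T => ¬ T = ∅)).card = 2^d - 1 := by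
      have := Finset.card_filter_add_card_filter_not
        (s := (N v).powerset) (p := fun T => T = ∅)
      rw [hem, Finset.card_singleton, Finset.card_powerset, hNcard v] at this
      omega
    calc (∑ T ∈ (N v).powerset, (h v T) ^ d)
        = ∑ T ∈ (N v).powerset, (if T = ∅ then ((2:ℝ≥0))^d else 1) := by
          refine Finset.sum_congr rfl (fun T _ => ?_)
          simp only [hh]
          split <;> simp
      _ = ((2:ℝ≥0))^d + ((2^d - 1 : ℕ) : ℝ≥0) := by
          rw [Finset.sum_ite, Finset.sum_const, Finset.sum_const, hem, hcards,
            Finset.card_singleton, one_smul, nsmul_eq_mul, mul_one]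
      _ = (((2:ℕ) ^ (d+1) - 1 : ℕ) : ℝ≥0) := by
          rw [← hnat]
          push_cast
          ring
  -- per-set product
  have hprod : ∀ S : Finset V, (∏ v ∈ Finset.univ, h v (S ∩ N v)) =
      ((2:ℝ≥0)) ^ ((Finset.univ.filter (fun v => ∀ u ∈ S, ¬ G.Adj u v)).card) := by
    intro S
    have hiff : ∀ v : V, (S ∩ N v = ∅) ↔ (∀ u ∈ S, ¬ G.Adj u v) := by
      intro v
      rw [Finset.eq_empty_iff_forall_notMem]
      constructor
      · intro hc u hu hadj
        exact hc u (Finset.mem_inter.mpr ⟨hu, (hNmem v u).mpr hadj.symm⟩)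
      · intro hc x hx
        have hx' := Finset.mem_inter.mp hx
        exact hc x hx'.1 ((hNmem v x).mp hx'.2).symm
    calc (∏ v ∈ Finset.univ, h v (S ∩ N v))
        = ∏ v ∈ Finset.univ,
            (if (∀ u ∈ S, ¬ G.Adj u v) then (2:ℝ≥0) else 1) := by
          refine Finset.prod_congr rfl (fun v _ => ?_)
          simp only [hh]
          exact if_congr (hiff v) rfl rfl
      _ = _ := by
          rw [Finset.prod_ite, Finset.prod_const, Finset.prod_const, one_pow, mul_one]
  -- main inequality over ℝ≥0
  have hmain : ((∑ S ∈ (Finset.univ : Finset V).powerset,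
      2 ^ ((Finset.univ.filter (fun v => ∀ u ∈ S, ¬ G.Adj u v)).card) : ℕ) : ℝ≥0) ^ d ≤
      (((2:ℕ) ^ (d+1) - 1 : ℕ) : ℝ≥0) ^ n := by
    have hcast : ((∑ S ∈ (Finset.univ : Finset V).powerset,
        2 ^ ((Finset.univ.filter (fun v => ∀ u ∈ S, ¬ G.Adj u v)).card) : ℕ) : ℝ≥0)
        = ∑ S ∈ (Finset.univ : Finset V).powerset,
            ∏ v ∈ Finset.univ, h v (S ∩ N v) := by
      push_cast
      exact Finset.sum_congr rfl (fun S _ => (hprod S).symm)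
    rw [hcast]
    calc (∑ S ∈ (Finset.univ : Finset V).powerset,
            ∏ v ∈ Finset.univ, h v (S ∩ N v)) ^ d
        ≤ ∏ v ∈ (Finset.univ : Finset V), ∑ T ∈ (N v).powerset, (h v T) ^ d :=
          finner d hd0 Finset.univ Finset.univ N h
            (fun v _ => Finset.subset_univ _) hcov
      _ = ∏ v ∈ (Finset.univ : Finset V), (((2:ℕ) ^ (d+1) - 1 : ℕ) : ℝ≥0) :=
          Finset.prod_congr rfl (fun v _ => hsum v)
      _ = _ := by rw [Finset.prod_const, Finset.card_univ]
  -- back to ℕ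
  have h4 : (∑ S ∈ (Finset.univ : Finset V).powerset,
      2 ^ ((Finset.univ.filter (fun v => ∀ u ∈ S, ¬ G.Adj u v)).card)) ^ d ≤
      (2 ^ (d+1) - 1) ^ n := by
    exact_mod_cast hmain
  have h5 : (indepFinset G).card ^ (2*d) ≤ (2 ^ (d+1) - 1) ^ n := by
    calc (indepFinset G).card ^ (2*d) = ((indepFinset G).card ^ 2) ^ d := by
          rw [← pow_mul]
      _ ≤ (∑ S ∈ (Finset.univ : Finset V).powerset,
            2 ^ ((Finset.univ.filter (fun v => ∀ u ∈ S, ¬ G.Adj u v)).card)) ^ d := by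
          apply Nat.pow_le_pow_left
          rw [← card_pairs G]
          exact sq_card_indep_le G
      _ ≤ _ := h4
  have h6 : ((2 ^ (d+1) - 1) ^ (n/(2*d))) ^ (2*d) = (2 ^ (d+1) - 1) ^ n := by
    rw [← pow_mul, Nat.div_mul_cancel hdvd]
  rw [← Nat.pow_le_pow_iff_left (n := 2*d) (by omega), h6]
  exact h5
end

section
/- Let d ≥ 1, λ > 0, and let C be any graph on at most d vertices. Then λ P'_C(λ)/(P_C(λ) − 1) ≤ λ d (1+λ)^{d−1}/((1+λ)^d − 1), with strict inequality unless P_C equals the independence polynomial of d isolated vertices (i.e. (1+λ)^d). Here when C has no vertices, interpret the left side as 0. -/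
open Finset
open scoped Classical

/-- The independence polynomial of a graph: the sum of `x ^ |I|` over all
independent sets `I` (including the empty set). -/
noncomputable def indepPoly {V : Type*} [Fintype V] (G : SimpleGraph V) (x : ℝ) : ℝ :=
  ∑ s ∈ Finset.univ.powerset.filter
      (fun s : Finset V => ∀ u ∈ s, ∀ v ∈ s, ¬ G.Adj u v), x ^ s.card

namespace IndepAux

variable {V : Type*} [Fintype V]

noncomputable def indA (C : SimpleGraph V) : Finset (Finset V) :=
  Finset.univ.powerset.filter (fun s : Finset V => ∀ u ∈ s, ∀ v ∈ s, ¬ C.Adj u v)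

noncomputable def na (C : SimpleGraph V) (k : ℕ) : ℕ :=
  ((indA C).filter (fun s => s.card = k)).card

lemma mem_indA {C : SimpleGraph V} {s : Finset V} :
    s ∈ indA C ↔ ∀ u ∈ s, ∀ v ∈ s, ¬ C.Adj u v := by
  simp [indA]

lemma na_zero (C : SimpleGraph V) : na C 0 = 1 := by
  rw [na, show (indA C).filter (fun s => s.card = 0) = {(∅ : Finset V)} from ?_,
    Finset.card_singleton]
  ext s
  simp only [Finset.mem_filter, Finset.mem_singleton, Finset.card_eq_zero, mem_indA]
  constructor
  · exact fun h => h.2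
  · rintro rfl; simp

lemma na_one (C : SimpleGraph V) : na C 1 = Fintype.card V := by
  rw [na, show (indA C).filter (fun s => s.card = 1)
      = Finset.univ.image (fun v : V => ({v} : Finset V)) from ?_]
  · rw [Finset.card_image_of_injective _ (fun a b h => by simpa using h)]
    simp
  · ext s
    simp only [Finset.mem_filter, Finset.mem_image, Finset.mem_univ, true_and, mem_indA]
    constructor
    · rintro ⟨h, hc⟩
      rw [Finset.card_eq_one] at hc
      obtain ⟨v, rfl⟩ := hc
      exact ⟨v, rfl⟩
    · rintro ⟨v, rfl⟩
      refine ⟨?_, Finset.card_singleton v⟩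
      intro u hu w hw
      simp only [Finset.mem_singleton] at hu hw
      subst hu; subst hw
      exact C.irrefl

lemma na_eq_zero {C : SimpleGraph V} {k : ℕ} (hk : Fintype.card V < k) : na C k = 0 := by
  rw [na, Finset.card_eq_zero]
  ext s
  simp only [Finset.mem_filter, Finset.notMem_empty, iff_false, not_and]
  intro _
  have h1 : s.card ≤ Fintype.card V := by
    simpa using Finset.card_le_card (Finset.subset_univ s)
  omega

/-- Double counting pairs (J, K) with J ⊆ K independent, |J| = j, |K| = k. -/
lemma na_mul_choose_le (C : SimpleGraph V) {j k : ℕ} :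
    na C k * k.choose j ≤ na C j * (Fintype.card V - j).choose (k - j) := by
  classical
  set Ak := (indA C).filter (fun s => s.card = k) with hAk
  set Aj := (indA C).filter (fun s => s.card = j) with hAj
  have step1 : na C k * k.choose j = ∑ K ∈ Ak, (Aj.filter (fun J => J ⊆ K)).card := by
    have : ∀ K ∈ Ak, (Aj.filter (fun J => J ⊆ K)).card = k.choose j := by
      intro K hK
      rw [Finset.mem_filter] at hK
      have : Aj.filter (fun J => J ⊆ K) = K.powersetCard j := by
        ext J
        simp only [Finset.mem_filter, Finset.mem_powersetCard, hAj, mem_indA]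
        constructor
        · rintro ⟨⟨_, hc⟩, hsub⟩; exact ⟨hsub, hc⟩
        · rintro ⟨hsub, hc⟩
          refine ⟨⟨fun u hu v hv => ?_, hc⟩, hsub⟩
          exact (mem_indA.mp hK.1) u (hsub hu) v (hsub hv)
      rw [this, Finset.card_powersetCard, hK.2]
    rw [Finset.sum_congr rfl this, Finset.sum_const, smul_eq_mul, na, mul_comm]
  have step2 : ∑ K ∈ Ak, (Aj.filter (fun J => J ⊆ K)).card
      = ∑ J ∈ Aj, (Ak.filter (fun K => J ⊆ K)).card := by
    simp only [Finset.card_filter]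
    exact Finset.sum_comm
  have step3 : ∀ J ∈ Aj, (Ak.filter (fun K => J ⊆ K)).card
      ≤ (Fintype.card V - j).choose (k - j) := by
    intro J hJ
    rw [Finset.mem_filter] at hJ
    have hle : (Ak.filter (fun K => J ⊆ K)).card
        ≤ ((Finset.univ \ J).powersetCard (k - j)).card := by
      apply Finset.card_le_card_of_injOn (fun K => K \ J)
      · intro K hK
        rw [Finset.mem_coe, Finset.mem_filter, hAk, Finset.mem_filter] at hK
        rw [Finset.mem_coe, Finset.mem_powersetCard]
        refine ⟨Finset.sdiff_subset_sdiff (Finset.subset_univ K) (le_refl J), ?_⟩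
        rw [Finset.card_sdiff_of_subset hK.2, hK.1.2, hJ.2]
      · intro K₁ h₁ K₂ h₂ h
        rw [Finset.mem_coe, Finset.mem_filter] at h₁ h₂
        simp only at h
        have e₁ : K₁ \ J ∪ J = K₁ := Finset.sdiff_union_of_subset h₁.2
        have e₂ : K₂ \ J ∪ J = K₂ := Finset.sdiff_union_of_subset h₂.2
        rw [← e₁, ← e₂, h]
    rw [Finset.card_powersetCard, Finset.card_sdiff_of_subset (Finset.subset_univ J),
      Finset.card_univ, hJ.2] at hle
    exact hle
  calc na C k * k.choose j = ∑ K ∈ Ak, (Aj.filter (fun J => J ⊆ K)).card := step1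
    _ = ∑ J ∈ Aj, (Ak.filter (fun K => J ⊆ K)).card := step2
    _ ≤ ∑ _J ∈ Aj, (Fintype.card V - j).choose (k - j) := Finset.sum_le_sum step3
    _ = na C j * (Fintype.card V - j).choose (k - j) := by
        rw [Finset.sum_const, smul_eq_mul, na]

lemma key (C : SimpleGraph V) {d j k : ℕ} (hV : Fintype.card V ≤ d) (hjk : j ≤ k)
    (hkd : k ≤ d) : na C k * d.choose j ≤ na C j * d.choose k := by
  have h1 := na_mul_choose_le C (j := j) (k := k)
  have h2 : (Fintype.card V - j).choose (k - j) ≤ (d - j).choose (k - j) :=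
    Nat.choose_le_choose _ (Nat.sub_le_sub_right hV j)
  have h3 : d.choose k * k.choose j = d.choose j * (d - j).choose (k - j) :=
    Nat.choose_mul hjk
  have hpos : 0 < k.choose j := Nat.choose_pos hjk
  have hmain : na C k * d.choose j * k.choose j ≤ na C j * d.choose k * k.choose j := by
    calc na C k * d.choose j * k.choose j = na C k * k.choose j * d.choose j := by ring
      _ ≤ na C j * (Fintype.card V - j).choose (k - j) * d.choose j :=
          Nat.mul_le_mul_right _ h1
      _ ≤ na C j * (d - j).choose (k - j) * d.choose j :=
          Nat.mul_le_mul_right _ (Nat.mul_le_mul_left _ h2)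
      _ = na C j * (d.choose j * (d - j).choose (k - j)) := by ring
      _ = na C j * (d.choose k * k.choose j) := by rw [← h3]
      _ = na C j * d.choose k * k.choose j := by ring
  exact Nat.le_of_mul_le_mul_right hmain hpos

lemma indepPoly_eq (C : SimpleGraph V) {d : ℕ} (hV : Fintype.card V ≤ d) (y : ℝ) :
    indepPoly C y = ∑ k ∈ Finset.range (d + 1), (na C k : ℝ) * y ^ k := by
  have hmaps : ∀ s ∈ indA C, s.card ∈ Finset.range (d + 1) := by
    intro s _
    rw [Finset.mem_range, Nat.lt_succ_iff]
    exact le_trans (by simpa using Finset.card_le_card (Finset.subset_univ s)) hV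
  calc indepPoly C y = ∑ s ∈ indA C, y ^ s.card := rfl
    _ = ∑ k ∈ Finset.range (d + 1), ∑ s ∈ (indA C).filter (fun s => s.card = k), y ^ s.card :=
        (Finset.sum_fiberwise_of_maps_to hmaps _).symm
    _ = ∑ k ∈ Finset.range (d + 1), (na C k : ℝ) * y ^ k := by
        refine Finset.sum_congr rfl fun k _ => ?_
        rw [Finset.sum_congr rfl (fun s hs => by rw [(Finset.mem_filter.mp hs).2]),
          Finset.sum_const, nsmul_eq_mul, na]

lemma deriv_indepPoly (C : SimpleGraph V) {d : ℕ} (hV : Fintype.card V ≤ d) (x : ℝ) :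
    deriv (indepPoly C) x
      = ∑ k ∈ Finset.range (d + 1), (na C k : ℝ) * ((k : ℝ) * x ^ (k - 1)) := by
  have heq : indepPoly C = fun y => ∑ k ∈ Finset.range (d + 1), (na C k : ℝ) * y ^ k :=
    funext (indepPoly_eq C hV)
  have h : HasDerivAt (indepPoly C)
      (∑ k ∈ Finset.range (d + 1), (na C k : ℝ) * ((k : ℝ) * x ^ (k - 1))) x := by
    rw [heq]
    exact HasDerivAt.fun_sum fun k _ => (hasDerivAt_pow k x).const_mul _
  exact h.deriv

lemma binom_eq (d : ℕ) (y : ℝ) :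
    (1 + y) ^ d = ∑ k ∈ Finset.range (d + 1), (d.choose k : ℝ) * y ^ k := by
  rw [add_comm (1 : ℝ) y, add_pow]
  refine Finset.sum_congr rfl fun k _ => ?_
  rw [one_pow]; ring

lemma binom_deriv (d : ℕ) (x : ℝ) :
    (d : ℝ) * (1 + x) ^ (d - 1)
      = ∑ k ∈ Finset.range (d + 1), (d.choose k : ℝ) * ((k : ℝ) * x ^ (k - 1)) := by
  have h1 : HasDerivAt (fun y : ℝ => (1 + y) ^ d) ((d : ℝ) * (1 + x) ^ (d - 1)) x := by
    have := ((hasDerivAt_id x).const_add 1).fun_pow d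
    simpa using this
  have h2 : HasDerivAt (fun y : ℝ => (1 + y) ^ d)
      (∑ k ∈ Finset.range (d + 1), (d.choose k : ℝ) * ((k : ℝ) * x ^ (k - 1))) x := by
    have heq : (fun y : ℝ => (1 + y) ^ d)
        = fun y => ∑ k ∈ Finset.range (d + 1), (d.choose k : ℝ) * y ^ k :=
      funext (binom_eq d)
    rw [heq]
    exact HasDerivAt.fun_sum fun k _ => (hasDerivAt_pow k x).const_mul _
  exact h1.unique h2

lemma mul_deriv_sum (c : ℕ → ℝ) (m : ℕ) (x : ℝ) :
    x * ∑ k ∈ Finset.range m, c k * ((k : ℝ) * x ^ (k - 1))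
      = ∑ k ∈ Finset.range m, (k : ℝ) * c k * x ^ k := by
  rw [Finset.mul_sum]
  refine Finset.sum_congr rfl fun k _ => ?_
  cases k with
  | zero => simp
  | succ n =>
    simp only [Nat.succ_sub_one, pow_succ]
    push_cast
    ring

/-- symmetrization identity -/
lemma sym_identity (T : Finset ℕ) (A B : ℕ → ℝ) (x : ℝ) :
    2 * ((∑ k ∈ T, (k : ℝ) * B k * x ^ k) * (∑ k ∈ T, A k * x ^ k)
        - (∑ k ∈ T, (k : ℝ) * A k * x ^ k) * (∑ k ∈ T, B k * x ^ k))
      = ∑ j ∈ T, ∑ k ∈ T, ((k : ℝ) - j) * (A j * B k - A k * B j) * x ^ (j + k) := by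
  have e1 : (∑ k ∈ T, (k : ℝ) * B k * x ^ k) * (∑ k ∈ T, A k * x ^ k)
      = ∑ j ∈ T, ∑ k ∈ T, (k : ℝ) * (A j * B k) * x ^ (j + k) := by
    rw [mul_comm, Finset.sum_mul_sum]
    exact Finset.sum_congr rfl fun j _ => Finset.sum_congr rfl fun k _ => by
      rw [pow_add]; ring
  have e2 : (∑ k ∈ T, (k : ℝ) * A k * x ^ k) * (∑ k ∈ T, B k * x ^ k)
      = ∑ j ∈ T, ∑ k ∈ T, (j : ℝ) * (A j * B k) * x ^ (j + k) := by
    rw [Finset.sum_mul_sum]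
    exact Finset.sum_congr rfl fun j _ => Finset.sum_congr rfl fun k _ => by
      rw [pow_add]; ring
  have hS : (∑ k ∈ T, (k : ℝ) * B k * x ^ k) * (∑ k ∈ T, A k * x ^ k)
      - (∑ k ∈ T, (k : ℝ) * A k * x ^ k) * (∑ k ∈ T, B k * x ^ k)
      = ∑ j ∈ T, ∑ k ∈ T, ((k : ℝ) - j) * (A j * B k) * x ^ (j + k) := by
    rw [e1, e2, ← Finset.sum_sub_distrib]
    refine Finset.sum_congr rfl fun j _ => ?_
    rw [← Finset.sum_sub_distrib]
    exact Finset.sum_congr rfl fun k _ => by ring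
  have hswap : ∑ j ∈ T, ∑ k ∈ T, ((k : ℝ) - j) * (A j * B k) * x ^ (j + k)
      = ∑ j ∈ T, ∑ k ∈ T, ((j : ℝ) - k) * (A k * B j) * x ^ (j + k) := by
    rw [Finset.sum_comm]
    exact Finset.sum_congr rfl fun j _ => Finset.sum_congr rfl fun k _ => by ring
  calc 2 * ((∑ k ∈ T, (k : ℝ) * B k * x ^ k) * (∑ k ∈ T, A k * x ^ k)
        - (∑ k ∈ T, (k : ℝ) * A k * x ^ k) * (∑ k ∈ T, B k * x ^ k))
      = (∑ j ∈ T, ∑ k ∈ T, ((k : ℝ) - j) * (A j * B k) * x ^ (j + k))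
        + ∑ j ∈ T, ∑ k ∈ T, ((j : ℝ) - k) * (A k * B j) * x ^ (j + k) := by
        rw [← hswap, hS]; ring
    _ = ∑ j ∈ T, ∑ k ∈ T, (((k : ℝ) - j) * (A j * B k) * x ^ (j + k)
          + ((j : ℝ) - k) * (A k * B j) * x ^ (j + k)) := by
        rw [← Finset.sum_add_distrib]
        exact Finset.sum_congr rfl fun j _ => (Finset.sum_add_distrib).symm
    _ = _ := Finset.sum_congr rfl fun j _ => Finset.sum_congr rfl fun k _ => by ring

end IndepAux

open IndepAux in
/-- For any graph $C$ on at most $d$ vertices and $\lambda > 0$, the expected size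
of a nonempty hard-core independent set, $\lambda P_C'(\lambda)/(P_C(\lambda)-1)$, is at
most $\lambda d(1+\lambda)^{d-1}/((1+\lambda)^d-1)$, with strict inequality unless
$P_C(\lambda) = (1+\lambda)^d$ (the independence polynomial of $d$ isolated
vertices). -/
theorem expected_size_conditioned_le {V : Type*} [Fintype V] (C : SimpleGraph V)
    (d : ℕ) (hd : 1 ≤ d) (hV : Fintype.card V ≤ d) (x : ℝ) (hx : 0 < x) :
    x * deriv (indepPoly C) x / (indepPoly C x - 1)
        ≤ x * d * (1 + x) ^ (d - 1) / ((1 + x) ^ d - 1)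
      ∧ ((¬ ∀ y : ℝ, indepPoly C y = (1 + y) ^ d) →
          x * deriv (indepPoly C) x / (indepPoly C x - 1)
            < x * d * (1 + x) ^ (d - 1) / ((1 + x) ^ d - 1)) := by
  classical
  set T : Finset ℕ := (Finset.range (d + 1)).erase 0 with hT
  have hmemT : ∀ k, k ∈ T ↔ k ≠ 0 ∧ k ≤ d := by
    intro k
    simp [hT, Finset.mem_erase, Finset.mem_range, Nat.lt_succ_iff]
  have h0T : (0 : ℕ) ∉ T := Finset.notMem_erase _ _
  have hins : insert 0 T = Finset.range (d + 1) :=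
    Finset.insert_erase (by simp)
  -- rewrite the four pieces
  have hLnum : x * deriv (indepPoly C) x = ∑ k ∈ T, (k : ℝ) * (na C k : ℝ) * x ^ k := by
    rw [deriv_indepPoly C hV x, mul_deriv_sum, ← hins, Finset.sum_insert h0T]
    simp
  have hLden : indepPoly C x - 1 = ∑ k ∈ T, (na C k : ℝ) * x ^ k := by
    rw [indepPoly_eq C hV x, ← hins, Finset.sum_insert h0T, na_zero]
    simp
  have hRnum : x * (d : ℝ) * (1 + x) ^ (d - 1)
      = ∑ k ∈ T, (k : ℝ) * (d.choose k : ℝ) * x ^ k := by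
    rw [mul_assoc, binom_deriv d x, mul_deriv_sum, ← hins, Finset.sum_insert h0T]
    simp
  have hRden : (1 + x) ^ d - 1 = ∑ k ∈ T, (d.choose k : ℝ) * x ^ k := by
    rw [binom_eq d x, ← hins, Finset.sum_insert h0T]
    simp
  have hx1 : (1 : ℝ) < 1 + x := by linarith
  have hDb : (0 : ℝ) < (1 + x) ^ d - 1 :=
    sub_pos.mpr (one_lt_pow₀ hx1 (by omega))
  have hDb' : (0 : ℝ) < ∑ k ∈ T, (d.choose k : ℝ) * x ^ k := hRden ▸ hDb
  have hdR : (0 : ℝ) < (d : ℝ) := by exact_mod_cast hd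
  have hRpos : (0 : ℝ) < x * d * (1 + x) ^ (d - 1) / ((1 + x) ^ d - 1) :=
    div_pos (mul_pos (mul_pos hx hdR) (pow_pos (by linarith) _)) hDb
  -- termwise nonnegativity
  have hterm : ∀ j ∈ T, ∀ k ∈ T,
      0 ≤ ((k : ℝ) - j) * ((na C j : ℝ) * (d.choose k : ℝ)
        - (na C k : ℝ) * (d.choose j : ℝ)) * x ^ (j + k) := by
    intro j hj k hk
    have hkd : k ≤ d := ((hmemT k).1 hk).2
    have hjd : j ≤ d := ((hmemT j).1 hj).2
    have hxp : (0 : ℝ) ≤ x ^ (j + k) := (pow_pos hx _).le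
    rcases le_total j k with h | h
    · have h1 : (na C k : ℝ) * (d.choose j : ℝ) ≤ (na C j : ℝ) * (d.choose k : ℝ) := by
        exact_mod_cast key C hV h hkd
      exact mul_nonneg (mul_nonneg
        (sub_nonneg.mpr (by exact_mod_cast h)) (sub_nonneg.mpr h1)) hxp
    · have h1 : (na C j : ℝ) * (d.choose k : ℝ) ≤ (na C k : ℝ) * (d.choose j : ℝ) := by
        exact_mod_cast key C hV h hjd
      apply mul_nonneg _ hxp
      have hn1 : ((k : ℝ) - j) ≤ 0 := sub_nonpos.mpr (by exact_mod_cast h)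
      have hn2 : (na C j : ℝ) * (d.choose k : ℝ) - (na C k : ℝ) * (d.choose j : ℝ) ≤ 0 :=
        sub_nonpos.mpr h1
      nlinarith [mul_nonneg (neg_nonneg.mpr hn1) (neg_nonneg.mpr hn2)]
  have hsym := sym_identity T (fun k => (na C k : ℝ)) (fun k => (d.choose k : ℝ)) x
  -- case on whether V is empty
  rcases Nat.eq_zero_or_pos (Fintype.card V) with hn0 | hn1
  · have hden0 : indepPoly C x - 1 = 0 := by
      rw [hLden]
      apply Finset.sum_eq_zero
      intro k hk
      have hk' := (hmemT k).1 hk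
      rw [na_eq_zero (show Fintype.card V < k by omega)]
      simp
    rw [hden0, div_zero]
    exact ⟨hRpos.le, fun _ => hRpos⟩
  · have h1T : (1 : ℕ) ∈ T := (hmemT 1).2 ⟨one_ne_zero, hd⟩
    have hDa : (0 : ℝ) < ∑ k ∈ T, (na C k : ℝ) * x ^ k := by
      apply Finset.sum_pos' (fun k _ => by positivity)
      refine ⟨1, h1T, ?_⟩
      rw [na_one]
      have hnp : (0 : ℝ) < (Fintype.card V : ℝ) := by exact_mod_cast hn1
      exact mul_pos hnp (pow_pos hx 1)
    rw [hLnum, hLden, hRnum, hRden]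
    have hsum_nonneg : (0:ℝ) ≤ ∑ j ∈ T, ∑ k ∈ T, ((k : ℝ) - j) * ((na C j : ℝ) * (d.choose k : ℝ)
        - (na C k : ℝ) * (d.choose j : ℝ)) * x ^ (j + k) :=
      Finset.sum_nonneg fun j hj => Finset.sum_nonneg fun k hk => hterm j hj k hk
    constructor
    · rw [div_le_div_iff₀ hDa hDb']
      linarith [hsym, hsum_nonneg]
    · intro hne
      rw [div_lt_div_iff₀ hDa hDb']
      have hposS : (0:ℝ) < ∑ j ∈ T, ∑ k ∈ T, ((k : ℝ) - j) * ((na C j : ℝ) * (d.choose k : ℝ)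
          - (na C k : ℝ) * (d.choose j : ℝ)) * x ^ (j + k) := by
        apply Finset.sum_pos'
          (fun j hj => Finset.sum_nonneg fun k hk => hterm j hj k hk)
        refine ⟨1, h1T, ?_⟩
        apply Finset.sum_pos' (fun k hk => hterm 1 h1T k hk)
        rcases lt_or_eq_of_le hV with hlt | heq
        · -- strictly fewer than d vertices: use k = card V + 1
          refine ⟨Fintype.card V + 1, (hmemT _).2 ⟨Nat.succ_ne_zero _, hlt⟩, ?_⟩
          rw [na_one, na_eq_zero (Nat.lt_succ_self _)]
          have hbp : (0:ℝ) < (d.choose (Fintype.card V + 1) : ℝ) := by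
            exact_mod_cast Nat.choose_pos hlt
          have hnp : (0:ℝ) < (Fintype.card V : ℝ) := by exact_mod_cast hn1
          have hxp := pow_pos hx (1 + (Fintype.card V + 1))
          push_cast
          nlinarith [mul_pos (mul_pos hnp hbp) hxp]
        · -- exactly d vertices
          have hm : ∃ m ∈ T, na C m ≠ d.choose m := by
            by_contra hcon
            push_neg at hcon
            apply hne
            intro y
            rw [indepPoly_eq C hV y, binom_eq d y]
            refine Finset.sum_congr rfl fun k hk => ?_
            by_cases hk0 : k = 0
            · subst hk0; rw [na_zero]; simp
            · rw [hcon k ((hmemT k).2 ⟨hk0, Nat.lt_succ_iff.mp (Finset.mem_range.mp hk)⟩)]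
          obtain ⟨m, hmT, hmne⟩ := hm
          have hm0 : m ≠ 0 := ((hmemT m).1 hmT).1
          have hmd : m ≤ d := ((hmemT m).1 hmT).2
          have hm1 : m ≠ 1 := by
            intro h; subst h
            exact hmne (by rw [na_one, heq, Nat.choose_one_right])
          have hmlt : na C m < d.choose m := by
            have hle := key C hV (Nat.zero_le m) hmd
            rw [na_zero, Nat.choose_zero_right, mul_one, one_mul] at hle
            exact lt_of_le_of_ne hle hmne
          refine ⟨m, hmT, ?_⟩
          have f1 : (0:ℝ) < (m:ℝ) - 1 := by
            have h2m : (2:ℕ) ≤ m := by omega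
            have : (2:ℝ) ≤ (m:ℝ) := by exact_mod_cast h2m
            linarith
          have f2 : (0:ℝ) < (na C 1 : ℝ) * (d.choose m : ℝ)
              - (na C m : ℝ) * (d.choose 1 : ℝ) := by
            rw [na_one, heq, Nat.choose_one_right]
            have hlt' : (na C m : ℝ) < (d.choose m : ℝ) := by exact_mod_cast hmlt
            nlinarith [mul_pos hdR (sub_pos.mpr hlt')]
          have hfin := mul_pos (mul_pos f1 f2) (pow_pos hx (1 + m))
          push_cast
          push_cast at hfin
          convert hfin using 2
      linarith [hsym, hposS]
end

section
/- Let d ≥ 1 and let (r_i)_{i=0}^{d} be nonnegative reals with r_0 = 1 satisfying (i+1) r_{i+1} ≤ (d−i) r_i for all 0 ≤ i < d, and let t_i = (d choose i). Then for every 1 ≤ k ≤ d, Σ_{i=1}^{⌊k/2⌋} (k − 2i)(t_{k−i} r_i − t_i r_{k−i}) ≥ 0; consequently every coefficient of the polynomial (λ P'(λ))(Q(λ) − 1) − (λ Q'(λ))(P(λ) − 1) is nonnegative, where P(λ) = (1+λ)^d and Q(λ) = 1 + Σ_{i=1}^d r_i λ^i. -/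
open Finset Polynomial

private lemma key_lemma (d : ℕ) (r : ℕ → ℝ) (hr : ∀ i, 0 ≤ r i)
    (hrec : ∀ i < d, ((i : ℝ) + 1) * r (i + 1) ≤ ((d : ℝ) - i) * r i) :
    ∀ i m, i ≤ m → m ≤ d → (d.choose i : ℝ) * r m ≤ (d.choose m : ℝ) * r i := by
  intro i m him
  induction m, him using Nat.le_induction with
  | base => intro _; exact le_refl _
  | succ m him ih =>
    intro hmd
    have hmd' : m < d := by omega
    have h1 := hrec m hmd'
    have ih' := ih (by omega)
    have hti : (0:ℝ) ≤ (d.choose i : ℝ) := by positivity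
    have h2 : (d.choose i : ℝ) * (((m:ℝ)+1) * r (m+1)) ≤
        (d.choose i : ℝ) * (((d:ℝ) - m) * r m) := mul_le_mul_of_nonneg_left h1 hti
    have hdm : (0:ℝ) ≤ (d:ℝ) - m := by
      have : (m:ℝ) ≤ d := by exact_mod_cast hmd'.le
      linarith
    have h3 : ((d:ℝ) - m) * ((d.choose i : ℝ) * r m) ≤
        ((d:ℝ) - m) * ((d.choose m : ℝ) * r i) := mul_le_mul_of_nonneg_left ih' hdm
    have hch : ((d:ℝ) - m) * (d.choose m : ℝ) = ((m:ℝ)+1) * (d.choose (m+1) : ℝ) := by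
      have := Nat.choose_succ_right_eq d m
      have h4 : (d.choose (m+1) * (m+1) : ℝ) = (d.choose m : ℝ) * ((d:ℝ) - m) := by
        rw [← Nat.cast_sub hmd'.le] at *
        exact_mod_cast this
      linarith
    have h5 : ((m:ℝ)+1) * ((d.choose i : ℝ) * r (m+1)) ≤
        ((m:ℝ)+1) * ((d.choose (m+1) : ℝ) * r i) := by
      calc ((m:ℝ)+1) * ((d.choose i : ℝ) * r (m+1))
          = (d.choose i : ℝ) * (((m:ℝ)+1) * r (m+1)) := by ring
        _ ≤ (d.choose i : ℝ) * (((d:ℝ)-m) * r m) := h2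
        _ = ((d:ℝ)-m) * ((d.choose i : ℝ) * r m) := by ring
        _ ≤ ((d:ℝ)-m) * ((d.choose m : ℝ) * r i) := h3
        _ = (((d:ℝ)-m) * (d.choose m : ℝ)) * r i := by ring
        _ = (((m:ℝ)+1) * (d.choose (m+1) : ℝ)) * r i := by rw [hch]
        _ = ((m:ℝ)+1) * ((d.choose (m+1) : ℝ) * r i) := by ring
    have hm1 : (0:ℝ) < (m:ℝ)+1 := by positivity
    exact le_of_mul_le_mul_left h5 hm1

/-- Let `r i` be nonnegative reals with `r 0 = 1` and `(i+1) r(i+1) ≤ (d-i) r i`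
for `i < d`, and let `t i = d.choose i`. Then for `1 ≤ k ≤ d` the sum
`∑_{i=1}^{⌊k/2⌋} (k-2i)(t_{k-i} r_i - t_i r_{k-i})` is nonnegative, and
consequently every coefficient of `(X·P')(Q-1) - (X·Q')(P-1)` is nonnegative,
where `P = (1+X)^d` and `Q = 1 + ∑_{i=1}^d r_i X^i`. -/
theorem coeff_nonneg_of_ratio_dominated (d : ℕ) (hd : 1 ≤ d) (r : ℕ → ℝ)
    (hr0 : r 0 = 1) (hr : ∀ i, 0 ≤ r i)
    (hrec : ∀ i < d, ((i : ℝ) + 1) * r (i + 1) ≤ ((d : ℝ) - i) * r i) :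
    (∀ k, 1 ≤ k → k ≤ d →
      0 ≤ ∑ i ∈ Finset.Icc 1 (k / 2),
        ((k : ℝ) - 2 * i) *
          ((d.choose (k - i) : ℝ) * r i - (d.choose i : ℝ) * r (k - i)))
    ∧ ∀ k : ℕ,
        0 ≤ (((X : ℝ[X]) * derivative ((1 + X : ℝ[X]) ^ d)) *
              ((1 + ∑ i ∈ Finset.Icc 1 d, C (r i) * X ^ i) - 1)
            - ((X : ℝ[X]) * derivative (1 + ∑ i ∈ Finset.Icc 1 d, C (r i) * X ^ i)) *
              ((1 + X : ℝ[X]) ^ d - 1)).coeff k := by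
  have key := key_lemma d r hr hrec
  constructor
  · intro k hk1 hkd
    apply Finset.sum_nonneg
    intro i hi
    rw [Finset.mem_Icc] at hi
    have h2i : 2 * i ≤ k := by omega
    apply mul_nonneg
    · have : (2*i : ℝ) ≤ (k : ℝ) := by exact_mod_cast h2i
      push_cast; linarith
    · have := key i (k - i) (by omega) (by omega)
      linarith
  · -- part 2
    intro k
    -- coefficient functions
    set a : ℕ → ℝ := fun j => (d.choose j : ℝ) with ha
    set b : ℕ → ℝ := fun j => if j ≤ d then r j else 0 with hb
    have hb0 : b 0 = 1 := by simp [hb, hr0, Nat.zero_le]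
    have ha0 : a 0 = 1 := by simp [ha]
    have hbnn : ∀ j, 0 ≤ b j := by
      intro j; simp only [hb]; split <;> [exact hr j; exact le_refl 0]
    have key' : ∀ i l, i ≤ l → a i * b l ≤ a l * b i := by
      intro i l hil
      by_cases hld : l ≤ d
      · simp only [hb, if_pos hld, if_pos (hil.trans hld)]
        exact key i l hil hld
      · have : d.choose l = 0 := Nat.choose_eq_zero_of_lt (by omega)
        simp only [hb, ha, if_neg hld, this, Nat.cast_zero, mul_zero, zero_mul, le_refl]
    set Q : ℝ[X] := 1 + ∑ i ∈ Finset.Icc 1 d, C (r i) * X ^ i with hQ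
    have hQc : ∀ j, Q.coeff j = b j := by
      intro j
      rw [hQ, coeff_add, Polynomial.coeff_one, Polynomial.finset_sum_coeff]
      simp only [coeff_C_mul, coeff_X_pow, mul_ite, mul_one, mul_zero]
      rw [Finset.sum_ite_eq (Finset.Icc 1 d) j r]
      simp only [Finset.mem_Icc, hb]
      rcases Nat.eq_zero_or_pos j with hj | hj
      · subst hj; simp [hr0]
      · split_ifs <;> simp_all <;> omega
    have hPc : ∀ j, ((1 + X : ℝ[X]) ^ d).coeff j = a j := by
      intro j; rw [coeff_one_add_X_pow]
    have hXD : ∀ (p : ℝ[X]) (j : ℕ), ((X : ℝ[X]) * derivative p).coeff j = (j:ℝ) * p.coeff j := by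
      intro p j
      cases j with
      | zero => simp [Polynomial.mul_coeff_zero]
      | succ n =>
        rw [coeff_X_mul, coeff_derivative]
        push_cast; ring
    -- compute the coefficient
    set c : ℕ → ℝ := fun j => a j * b (k - j) - b j * a (k - j) with hc
    have hcoeff : (((X : ℝ[X]) * derivative ((1 + X : ℝ[X]) ^ d)) * (Q - 1)
            - ((X : ℝ[X]) * derivative Q) * ((1 + X : ℝ[X]) ^ d - 1)).coeff k
        = ∑ j ∈ Finset.range k, (j:ℝ) * c j := by
      rw [coeff_sub, coeff_mul, coeff_mul,
        Finset.Nat.sum_antidiagonal_eq_sum_range_succ_mk,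
        Finset.Nat.sum_antidiagonal_eq_sum_range_succ_mk,
        ← Finset.sum_sub_distrib]
      have hterm : ∀ j ∈ Finset.range (k+1),
          ((X : ℝ[X]) * derivative ((1 + X : ℝ[X]) ^ d)).coeff j * (Q - 1).coeff (k - j)
          - ((X : ℝ[X]) * derivative Q).coeff j * (((1 + X : ℝ[X]) ^ d) - 1).coeff (k - j)
          = (j:ℝ) * c j - (if k - j = 0 then (j:ℝ) * (a j - b j) else 0) := by
        intro j hj
        rw [coeff_sub, coeff_sub, hXD, hXD, hQc, hPc, hQc, hPc, Polynomial.coeff_one]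
        simp only [hc]
        split_ifs <;> ring
      rw [Finset.sum_congr rfl hterm, Finset.sum_sub_distrib]
      have h2 : ∑ j ∈ Finset.range (k+1), (if k - j = 0 then (j:ℝ) * (a j - b j) else 0)
          = (k:ℝ) * (a k - b k) := by
        rw [Finset.sum_eq_single k]
        · simp
        · intro j hj hjk
          rw [Finset.mem_range] at hj
          exact if_neg (by omega)
        · intro h; exact absurd (Finset.self_mem_range_succ k) h
      rw [h2, Finset.sum_range_succ]
      have : (k:ℝ) * c k = (k:ℝ) * (a k - b k) := by
        simp only [hc, Nat.sub_self, hb0, ha0]; ring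
      rw [this]; ring
    rw [hcoeff]
    -- pairing argument
    have hcnz : ∀ j ∈ Finset.range k, (j:ℝ) * c j = (j:ℝ) * c j := fun _ _ => rfl
    have hrange : ∑ j ∈ Finset.range k, (j:ℝ) * c j = ∑ j ∈ Finset.Ico 1 k, (j:ℝ) * c j := by
      rcases Nat.eq_zero_or_pos k with hk | hk
      · subst hk; simp
      · rw [Finset.range_eq_Ico, Finset.sum_eq_sum_Ico_succ_bot hk]
        simp
    rw [hrange]
    have hrefl : ∑ j ∈ Finset.Ico 1 k, (j:ℝ) * c j
        = ∑ j ∈ Finset.Ico 1 k, ((k:ℝ) - j) * (- c j) := by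
      rw [Finset.sum_nbij' (i := fun j => k - j) (j := fun j => k - j)]
      · intro j hj; rw [Finset.mem_Ico] at *; omega
      · intro j hj; rw [Finset.mem_Ico] at *; omega
      · intro j hj; rw [Finset.mem_Ico] at hj; omega
      · intro j hj; rw [Finset.mem_Ico] at hj; omega
      · intro j hj
        rw [Finset.mem_Ico] at hj
        have h1 : k - (k - j) = j := by omega
        have h2 : ((k - j : ℕ):ℝ) = (k:ℝ) - j := by
          rw [Nat.cast_sub (by omega)]
        rw [h2, hc]
        simp only [h1]
        ring
    have hpos : 0 ≤ ∑ j ∈ Finset.Ico 1 k, ((j:ℝ) * c j + ((k:ℝ) - j) * (- c j)) := by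
      apply Finset.sum_nonneg
      intro j hj
      rw [Finset.mem_Ico] at hj
      have heq : (j:ℝ) * c j + ((k:ℝ) - j) * (- c j) = (2*(j:ℝ) - k) * c j := by ring
      rw [heq]
      by_cases h2j : 2 * j ≤ k
      · have hf : 2*(j:ℝ) - k ≤ 0 := by
          have : (2*j : ℝ) ≤ (k:ℝ) := by exact_mod_cast h2j
          push_cast at this; linarith
        have hcj : c j ≤ 0 := by
          have := key' j (k - j) (by omega)
          simp only [hc]; linarith
        nlinarith
      · have hf : 0 ≤ 2*(j:ℝ) - k := by
          have : (k : ℝ) ≤ (2*j : ℝ) := by exact_mod_cast Nat.le_of_lt (by omega)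
          push_cast at this; linarith
        have hcj : 0 ≤ c j := by
          have h3 := key' (k - j) j (by omega)
          have h1 : k - (k - j) = j := by omega
          simp only [hc, h1] at h3 ⊢
          linarith
        exact mul_nonneg hf hcj
    rw [Finset.sum_add_distrib] at hpos
    linarith [hrefl]
end

section
/- Let (a_j)_{j=0}^{n} be a nonnegative log-concave sequence with Σ_j p_j = 1 where p_j = a_j λ^j / Σ_i a_i λ^i for some λ > 0. If the variance of the distribution (p_j) is at most n/8, then max_j p_j > 1/(2√n). -/
open Finset

/-- Sum of squares of half-integers: `∑_{i<K} (i+1/2)² = K³/3 - K/12`. -/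
lemma sum_sq_half (K : ℕ) : ∑ i ∈ Finset.range K, ((i:ℝ)+1/2)^2 = (K:ℝ)^3/3 - (K:ℝ)/12 := by
  induction K with
  | zero => simp
  | succ k ih => rw [Finset.sum_range_succ, ih]; push_cast; ring

/-- Bathtub-type lower bound for the variance of a capped distribution on `{0,…,n}`:
if `p j ≤ M` for all `j`, then the variance is at least
`y - M·(y + 2·(K·y - K³/3 + K/12))` where `y = (K+1/2)²`. -/
lemma key (n K : ℕ) (hK : K ≤ n) (p : ℕ → ℝ) (hnn : ∀ j, 0 ≤ p j)
    (M : ℝ) (hcap : ∀ j ∈ Finset.range (n+1), p j ≤ M)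
    (hsum : ∑ j ∈ Finset.range (n+1), p j = 1) :
    ((K:ℝ)+1/2)^2 - M * (((K:ℝ)+1/2)^2 + 2*(K:ℝ)*(((K:ℝ)+1/2)^2) - 2*(K:ℝ)^3/3 + (K:ℝ)/6)
      ≤ ∑ j ∈ Finset.range (n+1), p j * ((j : ℝ) - ∑ i ∈ Finset.range (n + 1), p i * i) ^ 2 := by
  have hM : 0 ≤ M := le_trans (hnn 0) (hcap 0 (by simp))
  set μ : ℝ := ∑ i ∈ Finset.range (n + 1), p i * i with hμdef
  have hμ0 : 0 ≤ μ := Finset.sum_nonneg fun i _ => mul_nonneg (hnn i) (by positivity)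
  have hμn : μ ≤ n := by
    calc μ ≤ ∑ i ∈ Finset.range (n+1), p i * n := by
            apply Finset.sum_le_sum
            intro i hi
            have : (i:ℝ) ≤ n := by
              have := Finset.mem_range.mp hi
              exact_mod_cast Nat.lt_succ_iff.mp this
            exact mul_le_mul_of_nonneg_left this (hnn i)
      _ = n := by rw [← Finset.sum_mul, hsum, one_mul]
  set y : ℝ := ((K:ℝ)+1/2)^2 with hydef
  have hy0 : 0 ≤ y := by positivity
  set m : ℕ := ⌊μ + 1/2⌋₊ with hmdef
  have hm1 : (m:ℝ) ≤ μ + 1/2 := Nat.floor_le (by linarith)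
  have hm2 : μ + 1/2 < m + 1 := Nat.lt_floor_add_one _
  have hmn : m ≤ n := by
    have h1 : (m:ℝ) < n + 1 := by linarith
    exact_mod_cast Nat.lt_succ_iff.mp (by exact_mod_cast h1)
  have hμm : |μ - (m:ℝ)| ≤ 1/2 := abs_le.mpr ⟨by linarith, by linarith⟩
  set F : ℕ → ℝ := fun k : ℕ => max 0 (y - (max ((k:ℝ) - 1/2) 0)^2) with hFdef
  have hF0 : ∀ k, 0 ≤ F k := fun k => le_max_left _ _
  have hFy : ∀ k, F k ≤ y := fun k => max_le hy0 (by nlinarith [sq_nonneg (max ((k:ℝ) - 1/2) 0)])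
  -- Step 1: pointwise bound
  have step1 : ∀ j ∈ Finset.range (n+1),
      y * p j - M * F (max (j - m) (m - j)) ≤ p j * ((j:ℝ) - μ)^2 := by
    intro j hj
    set d : ℕ := max (j - m) (m - j) with hddef
    have hdabs : (d:ℝ) = |(j:ℝ) - (m:ℝ)| := by
      rcases le_total j m with h | h
      · have hd : d = m - j := by omega
        have hc : ((m - j : ℕ):ℝ) = (m:ℝ) - j := by push_cast [h]; ring
        rw [hd, hc, abs_sub_comm, abs_of_nonneg (sub_nonneg.mpr (Nat.cast_le.mpr h))]
      · have hd : d = j - m := by omega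
        have hc : ((j - m : ℕ):ℝ) = (j:ℝ) - m := by push_cast [h]; ring
        rw [hd, hc, abs_of_nonneg (sub_nonneg.mpr (Nat.cast_le.mpr h))]
    set t : ℝ := max ((d:ℝ) - 1/2) 0 with htdef
    have ht0 : 0 ≤ t := le_max_right _ _
    have htle : t ≤ |(j:ℝ) - μ| := by
      apply max_le _ (abs_nonneg _)
      have tri : |(j:ℝ) - (m:ℝ)| ≤ |(j:ℝ) - μ| + |μ - (m:ℝ)| := abs_sub_le _ _ _
      rw [hdabs]
      linarith
    have ht2 : t^2 ≤ ((j:ℝ) - μ)^2 := by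
      rw [← sq_abs ((j:ℝ) - μ)]
      exact pow_le_pow_left₀ ht0 htle 2
    have hFd : y - F d ≤ ((j:ℝ) - μ)^2 := by
      have : y - t^2 ≤ F d := le_max_right _ _
      linarith
    have h1 : p j * (y - F d) ≤ p j * ((j:ℝ) - μ)^2 :=
      mul_le_mul_of_nonneg_left hFd (hnn j)
    have h2 : p j * F d ≤ M * F d := mul_le_mul_of_nonneg_right (hcap j hj) (hF0 d)
    nlinarith [h1, h2]
  -- Step 2: sum the pointwise bounds
  have step2 : y - M * ∑ j ∈ Finset.range (n+1), F (max (j - m) (m - j))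
      ≤ ∑ j ∈ Finset.range (n+1), p j * ((j:ℝ) - μ)^2 := by
    have h := Finset.sum_le_sum step1
    rw [Finset.sum_sub_distrib, ← Finset.mul_sum, ← Finset.mul_sum, hsum, mul_one] at h
    exact h
  -- Step 3: reflection bound on the sum of F over distances
  have step3 : ∑ j ∈ Finset.range (n+1), F (max (j - m) (m - j))
      ≤ F 0 + 2 * ∑ i ∈ Finset.range n, F (i+1) := by
    have hsplit : ∑ j ∈ Finset.range (n+1), F (max (j-m) (m-j))
        = ∑ j ∈ Finset.Ico 0 m, F (max (j-m) (m-j)) + ∑ j ∈ Finset.Ico m (n+1), F (max (j-m) (m-j)) := by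
      rw [Finset.range_eq_Ico, Finset.sum_Ico_consecutive _ (Nat.zero_le m) (by omega)]
    have hA : ∑ j ∈ Finset.Ico 0 m, F (max (j-m) (m-j)) = ∑ j ∈ Finset.range m, F (m - j) := by
      rw [← Finset.range_eq_Ico]
      apply Finset.sum_congr rfl
      intro j hj
      have := Finset.mem_range.mp hj
      congr 1
      omega
    have hA2 : ∑ j ∈ Finset.range m, F (m - j) = ∑ j ∈ Finset.range m, F (j+1) := by
      rw [← Finset.sum_range_reflect (fun j => F (m - j)) m]
      apply Finset.sum_congr rfl
      intro j hj
      have := Finset.mem_range.mp hj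
      congr 1
      omega
    have hB : ∑ j ∈ Finset.Ico m (n+1), F (max (j-m) (m-j)) = ∑ i ∈ Finset.range (n+1-m), F i := by
      rw [Finset.sum_Ico_eq_sum_range]
      apply Finset.sum_congr rfl
      intro i _
      congr 1
      omega
    have hB2 : ∑ i ∈ Finset.range (n+1-m), F i ≤ ∑ i ∈ Finset.range (n+1), F i :=
      Finset.sum_le_sum_of_subset_of_nonneg (Finset.range_subset_range.mpr (by omega)) (fun i _ _ => hF0 i)
    have hA3 : ∑ j ∈ Finset.range m, F (j+1) ≤ ∑ j ∈ Finset.range n, F (j+1) :=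
      Finset.sum_le_sum_of_subset_of_nonneg (Finset.range_subset_range.mpr hmn) (fun i _ _ => hF0 _)
    have hsucc : ∑ i ∈ Finset.range (n+1), F i = F 0 + ∑ i ∈ Finset.range n, F (i+1) := by
      rw [Finset.sum_range_succ']
      ring
    linarith
  -- Step 4: closed form of the tail sum
  have step4 : ∑ i ∈ Finset.range n, F (i+1) = (K:ℝ)*y - ((K:ℝ)^3/3 - (K:ℝ)/12) := by
    have hFval : ∀ k : ℕ, 1 ≤ k → (k:ℝ) ≤ (K:ℝ) → F k = y - ((k:ℝ)-1/2)^2 := by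
      intro k h1 h2
      have h1' : (1:ℝ) ≤ (k:ℝ) := by exact_mod_cast h1
      rw [hFdef]
      simp only
      rw [max_eq_left (by linarith : (0:ℝ) ≤ (k:ℝ) - 1/2)]
      apply max_eq_right
      nlinarith
    have hFz : ∀ k : ℕ, (K:ℝ) < (k:ℝ) → F k = 0 := by
      intro k h2
      have h0 : (0:ℝ) ≤ (K:ℝ) := by positivity
      have hk1 : (K:ℝ) + 1 ≤ (k:ℝ) := by exact_mod_cast h2
      rw [hFdef]
      simp only
      rw [max_eq_left (by linarith : (0:ℝ) ≤ (k:ℝ) - 1/2)]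
      apply max_eq_left
      nlinarith
    have hsplitK : ∑ i ∈ Finset.range K, F (i+1) + ∑ i ∈ Finset.Ico K n, F (i+1)
        = ∑ i ∈ Finset.range n, F (i+1) := Finset.sum_range_add_sum_Ico _ hK
    have hzero : ∑ i ∈ Finset.Ico K n, F (i+1) = 0 := by
      apply Finset.sum_eq_zero
      intro i hi
      apply hFz
      have h : K ≤ i := (Finset.mem_Ico.mp hi).1
      have : (K:ℝ) ≤ (i:ℝ) := by exact_mod_cast h
      push_cast
      linarith
    have hval : ∑ i ∈ Finset.range K, F (i+1) = ∑ i ∈ Finset.range K, (y - ((i:ℝ)+1/2)^2) := by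
      apply Finset.sum_congr rfl
      intro i hi
      have hiK : i + 1 ≤ K := Finset.mem_range.mp hi
      rw [hFval (i+1) (by omega) (by exact_mod_cast hiK)]
      push_cast
      ring
    rw [← hsplitK, hzero, hval, Finset.sum_sub_distrib, Finset.sum_const, sum_sq_half,
      Finset.card_range, nsmul_eq_mul]
    ring
  have hF00 : F 0 ≤ y := hFy 0
  have hS : ∑ j ∈ Finset.range (n+1), F (max (j - m) (m - j))
      ≤ y + 2*((K:ℝ)*y - ((K:ℝ)^3/3 - (K:ℝ)/12)) := by
    rw [step4] at step3
    linarith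
  have hMS : M * ∑ j ∈ Finset.range (n+1), F (max (j - m) (m - j))
      ≤ M * (y + 2*((K:ℝ)*y - ((K:ℝ)^3/3 - (K:ℝ)/12))) := mul_le_mul_of_nonneg_left hS hM
  have : y - M * (y + 2*((K:ℝ)*y - ((K:ℝ)^3/3 - (K:ℝ)/12)))
      ≤ ∑ j ∈ Finset.range (n+1), p j * ((j:ℝ) - μ)^2 := by linarith
  calc ((K:ℝ)+1/2)^2 - M * (((K:ℝ)+1/2)^2 + 2*(K:ℝ)*(((K:ℝ)+1/2)^2) - 2*(K:ℝ)^3/3 + (K:ℝ)/6)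
      = y - M * (y + 2*((K:ℝ)*y - ((K:ℝ)^3/3 - (K:ℝ)/12))) := by rw [hydef]; ring
    _ ≤ _ := this

/-- The elementary cubic estimate used in the main theorem for `n ≥ 4`. -/
lemma cubic_pos (k s : ℝ) (hk1 : 1 ≤ k) (ha' : k+1 ≤ s) (hb' : s^2 ≤ (k+2)^2 - 1) (hs0 : 0 < s) :
    s^2/8 < (k+1/2)^2 - 1/(2*s) * ((k+1/2)^2 + 2*k*((k+1/2)^2) - 2*k^3/3 + k/6) := by
  have hbs : s < k + 2 := by nlinarith
  have hGA : (0:ℝ) < 5*k^3+3*k^2+k := by nlinarith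
  have hGB : (0:ℝ) < 5*k^3+18*k^2-2*k-15 := by nlinarith
  have hGpos : 0 < 8*((k+1/2)^2)*s - 4*((k+1/2)^2 + 2*k*((k+1/2)^2) - 2*k^3/3 + k/6) - s^3 := by
    have hid : 8*((k+1/2)^2)*s - 4*((k+1/2)^2 + 2*k*((k+1/2)^2) - 2*k^3/3 + k/6) - s^3
        = ((5*k^3+3*k^2+k)/3)*((k+2)-s) + ((5*k^3+18*k^2-2*k-15)/3)*(s-(k+1))
          + (s-(k+1))*((k+2)-s)*(s+2*k+3) := by ring
    rw [hid]
    have t1 : 0 < ((5*k^3+3*k^2+k)/3)*((k+2)-s) := mul_pos (by linarith) (by linarith)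
    have t2 : 0 ≤ ((5*k^3+18*k^2-2*k-15)/3)*(s-(k+1)) := mul_nonneg (by linarith) (by linarith)
    have t3 : 0 ≤ (s-(k+1))*((k+2)-s)*(s+2*k+3) :=
      mul_nonneg (mul_nonneg (by linarith) (by linarith)) (by linarith)
    linarith
  have h8 : 8*s*((k+1/2)^2 - 1/(2*s) * ((k+1/2)^2 + 2*k*((k+1/2)^2) - 2*k^3/3 + k/6) - s^2/8)
      = 8*((k+1/2)^2)*s - 4*((k+1/2)^2 + 2*k*((k+1/2)^2) - 2*k^3/3 + k/6) - s^3 := by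
    field_simp
    ring
  nlinarith [hGpos, hs0, h8]

/-- Let `(a_j)` be a nonnegative sequence, `λ > 0`, and `p j = a_j λ^j / ∑_i a_i λ^i`
the induced probability distribution on `{0,…,n}`. If `(p_j)` is log-concave,
sums to `1`, and has variance at most `n/8`, then its maximum exceeds `1/(2√n)`. -/
theorem log_concave_mode_bound (n : ℕ) (hn : 1 ≤ n) (a : ℕ → ℝ) (ha : ∀ j, 0 ≤ a j)
    (l : ℝ) (hl : 0 < l) (p : ℕ → ℝ)
    (hp : ∀ j, p j = a j * l ^ j / ∑ i ∈ Finset.range (n + 1), a i * l ^ i)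
    (hlc : ∀ j, 0 < j → j < n → p (j - 1) * p (j + 1) ≤ p j ^ 2)
    (hsum : ∑ j ∈ Finset.range (n + 1), p j = 1)
    (hvar : ∑ j ∈ Finset.range (n + 1),
        p j * ((j : ℝ) - ∑ i ∈ Finset.range (n + 1), p i * i) ^ 2 ≤ n / 8) :
    ∃ j ∈ Finset.range (n + 1), 1 / (2 * Real.sqrt n) < p j := by
  by_contra hcon
  push_neg at hcon
  have hnn : ∀ j, 0 ≤ p j := by
    intro j
    rw [hp j]
    exact div_nonneg (mul_nonneg (ha j) (pow_nonneg hl.le j))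
      (Finset.sum_nonneg fun i _ => mul_nonneg (ha i) (pow_nonneg hl.le i))
  rcases lt_or_ge n 4 with h4 | h4
  · interval_cases n
    · -- n = 1
      have h0 := hcon 0 (by norm_num)
      have h1 := hcon 1 (by norm_num)
      norm_num [Real.sqrt_one] at h0 h1
      have hsum' : p 0 + p 1 = 1 := by
        have := hsum
        simp [Finset.sum_range_succ] at this
        linarith
      have e1 : ∑ i ∈ Finset.range (1 + 1), p i * (i:ℝ) = p 1 := by
        simp [Finset.sum_range_succ]
      rw [e1] at hvar
      have e2 : ∑ j ∈ Finset.range (1 + 1), p j * ((j:ℝ) - p 1)^2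
          = p 0 * (0 - p 1)^2 + p 1 * (1 - p 1)^2 := by
        simp [Finset.sum_range_succ]
      rw [e2] at hvar
      have hp0 : p 0 = 1/2 := by linarith
      have hp1 : p 1 = 1/2 := by linarith
      rw [hp0, hp1] at hvar
      norm_num at hvar
    · -- n = 2
      have h0 := hcon 0 (by norm_num)
      have h1 := hcon 1 (by norm_num)
      have h2 := hcon 2 (by norm_num)
      set s := Real.sqrt ((2:ℕ):ℝ) with hsdef
      have hs2 : s^2 = 2 := by
        rw [hsdef]
        rw [Real.sq_sqrt] <;> norm_num
      have hs0 : 0 < s := by rw [hsdef]; positivity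
      have hm : 1/(2*s) = s/4 := by
        rw [div_eq_div_iff (by positivity) (by norm_num)]
        nlinarith
      rw [hm] at h0 h1 h2
      have hs32 : s ≤ 3/2 := by nlinarith
      have hsum' : p 0 + p 1 + p 2 = 1 := by
        have := hsum
        simp [Finset.sum_range_succ] at this
        linarith
      have e1 : ∑ i ∈ Finset.range (2 + 1), p i * (i:ℝ) = p 1 + 2 * p 2 := by
        simp [Finset.sum_range_succ]
        ring
      rw [e1] at hvar
      have e2 : ∑ j ∈ Finset.range (2 + 1), p j * ((j:ℝ) - (p 1 + 2 * p 2))^2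
          = p 0 * (0 - (p 1 + 2*p 2))^2 + p 1 * (1 - (p 1 + 2*p 2))^2
            + p 2 * (2 - (p 1 + 2*p 2))^2 := by
        simp [Finset.sum_range_succ]
      rw [e2] at hvar
      have hid : p 0 * (0 - (p 1 + 2*p 2))^2 + p 1 * (1 - (p 1 + 2*p 2))^2
            + p 2 * (2 - (p 1 + 2*p 2))^2
          = (p 0 + p 2) - (p 2 - p 0)^2 := by
        linear_combination ((p 1 + 2*p 2)^2 + p 0 - p 1 - 3*p 2) * hsum'
      rw [hid] at hvar
      have hprod : 0 ≤ (s/4 - p 2 + p 0) * (s/4 + p 2 - p 0) :=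
        mul_nonneg (by linarith [hnn 0]) (by linarith [hnn 2])
      have h28 : ((2:ℕ):ℝ)/8 = 1/4 := by norm_num
      rw [h28] at hvar
      nlinarith [hvar, hprod, hs2, hs32, h1, hnn 1]
    · -- n = 3
      have hs2 : Real.sqrt ((3:ℕ):ℝ) ^ 2 = 3 := by
        rw [Real.sq_sqrt] <;> norm_num
      have hs0 : 0 < Real.sqrt ((3:ℕ):ℝ) := by positivity
      have hkey := key 3 1 (by norm_num) p hnn (1/(2*Real.sqrt (3:ℕ))) hcon hsum
      set s := Real.sqrt ((3:ℕ):ℝ) with hsdef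
      norm_num at hkey hvar
      have h5 : (15:ℝ)/8 ≤ s⁻¹ * (1/2) * (25/4) := by linarith
      have h6 := mul_le_mul_of_nonneg_left h5 hs0.le
      have h7 : s * (s⁻¹ * (1/2) * (25/4)) = 25/8 := by
        field_simp
        ring
      nlinarith [h6, h7, hs2, hs0]
  · -- n ≥ 4
    have hs2 : Real.sqrt n ^ 2 = n := Real.sq_sqrt (by positivity)
    have hs0 : 0 < Real.sqrt n :=
      Real.sqrt_pos.mpr (by exact_mod_cast Nat.lt_of_lt_of_le (by norm_num) h4)
    obtain ⟨K, hKq⟩ : ∃ K, K + 1 = Nat.sqrt n := by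
      have : 2 ≤ Nat.sqrt n := Nat.le_sqrt.mpr (by omega)
      exact ⟨Nat.sqrt n - 1, by omega⟩
    have hK1 : 1 ≤ K := by
      have : 2 ≤ Nat.sqrt n := Nat.le_sqrt.mpr (by omega)
      omega
    have hsq : (K+1)^2 ≤ n := by rw [hKq]; exact Nat.sqrt_le' n
    have hlt : n < (K+2)^2 := by
      have h := Nat.lt_succ_sqrt' n
      have hq : K + 2 = Nat.sqrt n + 1 := by omega
      rw [hq]
      exact h
    have hKn : K ≤ n := by
      have : K + 1 ≤ (K+1)^2 := Nat.le_self_pow (by norm_num) _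
      omega
    have hkey := key n K hKn p hnn (1/(2*Real.sqrt n)) hcon hsum
    have hk1 : (1:ℝ) ≤ (K:ℝ) := by exact_mod_cast hK1
    have ha' : (K:ℝ) + 1 ≤ Real.sqrt n := by
      have hc : ((K:ℝ)+1)^2 ≤ Real.sqrt n ^ 2 := by
        rw [hs2]
        exact_mod_cast hsq
      nlinarith
    have hb' : Real.sqrt n ^ 2 ≤ ((K:ℝ)+2)^2 - 1 := by
      rw [hs2]
      have : (n:ℝ) + 1 ≤ (((K:ℝ))+2)^2 := by exact_mod_cast hlt
      linarith
    have hfin := cubic_pos (K:ℝ) (Real.sqrt n) hk1 ha' hb' hs0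
    rw [hs2] at hfin
    linarith [hkey, hvar, hfin]
end
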